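/- Fix a state S ∈ 𝒮. The set { η(ΔT, S, I) : ΔT ∈ {1,…,τ}, I a nonempty subset of {1,…,N} } has cardinality exactly τ·(2^N − 1) and does not contain the all-zero matrix O. Consequently, from any state S there are exactly τ·(2^N − 1) distinct nonzero states reachable in one step of the state-update map. -/

import Mathlib

/-! `D^k` pushes the rows of a matrix down by `k`, so the rows of `η(ΔT, S, I)` above row
`ΔT − 1` vanish and row `ΔT − 1` (counting from `0`) is the indicator of `I`. For nonempty `I`
that row is nonzero, so the first nonzero row of `η(ΔT, S, I)` recovers `ΔT`, and that row
recovers `I`. Hence `(ΔT, I) ↦ η(ΔT, S, I)` is injective and never hits `O`. -/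

open Finset

/-- The `τ×τ` lower shift matrix `D`, with `D r c = 1` iff `r − c = 1`. -/
def shiftD (τ : ℕ) : Matrix (Fin τ) (Fin τ) ℤ :=
  Matrix.of fun r c => if (r : ℕ) = (c : ℕ) + 1 then 1 else 0

/-- The `τ×N` indicator matrix `𝐈(I)`, with entry `1` iff the row is the first row and the
column belongs to `I`. -/
def indMat (τ N : ℕ) (I : Finset (Fin N)) : Matrix (Fin τ) (Fin N) ℤ :=
  Matrix.of fun r c => if (r : ℕ) = 0 ∧ c ∈ I then 1 else 0

/-- The state-update map `η(ΔT, S, I) = D^{ΔT−1}(D S + 𝐈(I))`. -/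
def eta (τ N : ℕ) (ΔT : ℕ) (S : Matrix (Fin τ) (Fin N) ℤ) (I : Finset (Fin N)) :
    Matrix (Fin τ) (Fin N) ℤ :=
  shiftD τ ^ (ΔT - 1) * (shiftD τ * S + indMat τ N I)

section Shift

variable {τ : ℕ} {n : Type*}

lemma shiftD_mul_apply (M : Matrix (Fin τ) n ℤ) (r : Fin τ) (c : n) :
    (shiftD τ * M) r c = if h : 1 ≤ (r : ℕ) then M ⟨(r : ℕ) - 1, by omega⟩ c else 0 := by
  rw [Matrix.mul_apply]
  simp only [shiftD, Matrix.of_apply, ite_mul, one_mul, zero_mul]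
  split_ifs with h
  · have hrow (j : Fin τ) : (r : ℕ) = j + 1 ↔ j = ⟨(r : ℕ) - 1, by omega⟩ := by
      rw [Fin.ext_iff]
      dsimp only
      omega
    simp only [hrow, sum_ite_eq', mem_univ, if_true]
  · exact Finset.sum_eq_zero fun j _ => if_neg (by omega)

lemma shiftD_pow_mul_apply (k : ℕ) (M : Matrix (Fin τ) n ℤ) (r : Fin τ) (c : n) :
    (shiftD τ ^ k * M) r c = if h : k ≤ (r : ℕ) then M ⟨(r : ℕ) - k, by omega⟩ c else 0 := by
  induction k generalizing r with
  | zero => simp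
  | succ k ih =>
    rw [pow_succ', Matrix.mul_assoc, shiftD_mul_apply]
    by_cases h : k + 1 ≤ (r : ℕ)
    · rw [dif_pos (by omega), ih, dif_pos (by simp; omega), dif_pos h]
      congr 2
      dsimp only
      omega
    · rw [dif_neg h]
      split_ifs with h1
      · rw [ih, dif_neg (by simp; omega)]
      · rfl

end Shift

section Eta

variable {τ N : ℕ} {ΔT : ℕ} (S : Matrix (Fin τ) (Fin N) ℤ) (I : Finset (Fin N))

lemma eta_apply_of_lt {r : Fin τ} (hr : (r : ℕ) + 1 < ΔT) (c : Fin N) :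
    eta τ N ΔT S I r c = 0 := by
  rw [eta, shiftD_pow_mul_apply, dif_neg (by omega)]

lemma eta_apply_pred (h1 : 1 ≤ ΔT) (hτ : ΔT ≤ τ) (c : Fin N) :
    eta τ N ΔT S I ⟨ΔT - 1, by omega⟩ c = if c ∈ I then 1 else 0 := by
  rw [eta, shiftD_pow_mul_apply, dif_pos le_rfl, Matrix.add_apply, shiftD_mul_apply]
  simp [indMat]

lemma eta_ne_zero (h1 : 1 ≤ ΔT) (hτ : ΔT ≤ τ) (hI : I.Nonempty) : eta τ N ΔT S I ≠ 0 := by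
  obtain ⟨c, hc⟩ := hI
  intro h
  have hrow := eta_apply_pred S I h1 hτ c
  simp [h, hc] at hrow

variable {S I}

lemma le_of_eta_eq {ΔT' : ℕ} {J : Finset (Fin N)} (h1 : 1 ≤ ΔT) (hτ : ΔT ≤ τ)
    (hI : I.Nonempty) (heq : eta τ N ΔT S I = eta τ N ΔT' S J) : ΔT' ≤ ΔT := by
  by_contra! hlt
  obtain ⟨c, hc⟩ := hI
  have hrow := eta_apply_pred S I h1 hτ c
  rw [heq, eta_apply_of_lt S J (by simp; omega), if_pos hc] at hrow
  exact zero_ne_one hrow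

lemma eta_injOn :
    Set.InjOn (fun q : ℕ × Finset (Fin N) => eta τ N q.1 S q.2)
      ↑(Icc 1 τ ×ˢ univ.filter fun I : Finset (Fin N) => I.Nonempty) := by
  rintro ⟨a, I⟩ ha ⟨b, J⟩ hb heq
  simp only [coe_product, coe_filter, Set.mem_prod, mem_coe, mem_Icc, mem_univ, true_and,
    Set.mem_ofPred_eq] at ha hb heq
  obtain ⟨⟨ha1, haτ⟩, hI⟩ := ha
  obtain ⟨⟨hb1, hbτ⟩, hJ⟩ := hb
  obtain rfl : a = b :=
    le_antisymm (le_of_eta_eq hb1 hbτ hJ heq.symm) (le_of_eta_eq ha1 haτ hI heq)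
  have hIJ : I = J := by
    ext c
    have hrow := congr_fun₂ heq ⟨a - 1, by omega⟩ c
    rw [eta_apply_pred S I ha1 haτ, eta_apply_pred S J ha1 haτ] at hrow
    split_ifs at hrow <;> simp_all
  rw [hIJ]

end Eta

lemma card_filter_nonempty (α : Type*) [Fintype α] [DecidableEq α] :
    (univ.filter fun I : Finset α => I.Nonempty).card = 2 ^ Fintype.card α - 1 := by
  simp only [nonempty_iff_ne_empty, filter_ne', card_erase_of_mem (mem_univ _), card_univ,
    Fintype.card_finset]

theorem stmt_3_general (τ N : ℕ)
    (S : Matrix (Fin τ) (Fin N) ℤ) :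
    ((Finset.Icc 1 τ ×ˢ Finset.univ.filter fun I : Finset (Fin N) => I.Nonempty).image
        (fun q : ℕ × Finset (Fin N) => eta τ N q.1 S q.2)).card = τ * (2 ^ N - 1) ∧
      (0 : Matrix (Fin τ) (Fin N) ℤ) ∉
        ((Finset.Icc 1 τ ×ˢ Finset.univ.filter fun I : Finset (Fin N) => I.Nonempty).image
          (fun q : ℕ × Finset (Fin N) => eta τ N q.1 S q.2)) := by
  constructor
  · rw [card_image_of_injOn eta_injOn, card_product, Nat.card_Icc, card_filter_nonempty,
      Fintype.card_fin, Nat.add_sub_cancel]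
  · simp only [mem_image, mem_product, mem_Icc, mem_filter, mem_univ, true_and, Prod.exists,
      not_exists, not_and, and_imp]
    exact fun ΔT I h1 hτ hI heq => eta_ne_zero S I h1 hτ hI heq

/-- **Number of states reachable in one step.**  Fix a binary state `S`.  The set
`{ η(ΔT, S, I) : ΔT ∈ {1,…,τ}, I nonempty }` has exactly `τ·(2^N − 1)` elements and does
not contain the all-zero matrix `O`. -/
theorem stmt_3 (τ N : ℕ) (hτ : 1 ≤ τ) (hN : 1 ≤ N)
    (S : Matrix (Fin τ) (Fin N) ℤ) (hS : ∀ r c, S r c = 0 ∨ S r c = 1) :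
    ((Finset.Icc 1 τ ×ˢ Finset.univ.filter fun I : Finset (Fin N) => I.Nonempty).image
        (fun q : ℕ × Finset (Fin N) => eta τ N q.1 S q.2)).card = τ * (2 ^ N - 1) ∧
      (0 : Matrix (Fin τ) (Fin N) ℤ) ∉
        ((Finset.Icc 1 τ ×ˢ Finset.univ.filter fun I : Finset (Fin N) => I.Nonempty).image
          (fun q : ℕ × Finset (Fin N) => eta τ N q.1 S q.2)) :=
  stmt_3_general τ N S
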